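/- Let N be an arbitrary subset of ℕ, regarded as a metric space with the distance d(m, n) = |m − n|. Then the group of bijections φ : N → N satisfying |φ(m) − φ(n)| = |m − n| for all m, n ∈ N has at most two elements. -/

import Mathlib

/-!
Let `m` be the least element of `N`. An isometry fixing `m` is the identity, since a point of
`N` lies above `m` and is therefore determined by its distance to `m`; so an isometry is
determined by its value at `m`. If an isometry `θ` moves `m`, then `θ` swaps `m` and `θ m`,
and comparing distances to these two points shows that `θ m` is the greatest element of `N`.
Hence `θ m ∈ {min N, max N}` for every isometry `θ`, and of three isometries two agree at `m`.
-/

/-- Cost structure for the Levenshtein edit distance (removed from Mathlib; restored here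
with its old definition from `Mathlib/Data/List/EditDistance/Defs.lean`). -/
structure Levenshtein.Cost (α β δ : Type*) where
  /-- Cost to delete an element from a list. -/
  delete : α → δ
  /-- Cost in insert an element into a list. -/
  insert : β → δ
  /-- Cost to substitute one element for another in a list. -/
  substitute : α → β → δ

/-- (Implementation detail for `suffixLevenshtein`) -/
def Levenshtein.impl {α β δ : Type*} [AddZeroClass δ] [Min δ]
    (C : Levenshtein.Cost α β δ)
    (xs : List α) (y : β) (d : {r : List δ // 0 < r.length}) : {r : List δ // 0 < r.length} :=
  let ⟨ds, w⟩ := d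
  xs.zip (ds.zip ds.tail) |>.foldr
    (init := ⟨[ds.getLast (List.length_pos_iff.mp w) + C.insert y], by simp⟩)
    (fun ⟨x, d₀, d₁⟩ ⟨r, w⟩ =>
      ⟨min (C.delete x + r[0]) (min (C.insert y + d₀) (C.substitute x y + d₁)) :: r, by simp⟩)

/-- `suffixLevenshtein C xs ys` computes the Levenshtein distance
(using the cost functions provided by a `C : Cost α β δ`)
from each suffix of the list `xs` to the list `ys`. -/
def suffixLevenshtein {α β δ : Type*} [AddZeroClass δ] [Min δ]
    (C : Levenshtein.Cost α β δ) (xs : List α) (ys : List β) :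
    {r : List δ // 0 < r.length} :=
  ys.foldr
    (Levenshtein.impl C xs)
    (xs.foldr (init := ⟨[0], by simp⟩)
      (fun a ⟨r, w⟩ => ⟨(C.delete a + r[0]) :: r, by simp⟩))

/-- `levenshtein C xs ys` computes the Levenshtein distance
(using the cost functions provided by a `C : Cost α β δ`)
from the list `xs` to the list `ys`. -/
def levenshtein {α β δ : Type*} [AddZeroClass δ] [Min δ]
    (C : Levenshtein.Cost α β δ) (xs : List α) (ys : List β) : δ :=
  let ⟨r, w⟩ := suffixLevenshtein C xs ys
  r[0]

/-- Cost structure for the generalized Levenshtein distance: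
insertions and deletions cost `γ`, substitutions cost `θ`. -/
def levCost (A : Type*) [DecidableEq A] (γ θ : ℝ) : Levenshtein.Cost A A ℝ where
  delete _ := γ
  insert _ := γ
  substitute a b := if a = b then 0 else θ

/-- The generalized Levenshtein distance `lev_{γ,θ}` between two words over `A`:
the minimal total cost of transforming one word into the other by insertions and
deletions (of cost `γ`) and substitutions (of cost `θ`). -/
def lev {A : Type*} [DecidableEq A] (γ θ : ℝ) (u v : List A) : ℝ :=
  levenshtein (levCost A γ θ) u v

/-- The isometry group of a language `L ⊆ A*` with respect to a distance `d` on `A*`: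
the group (under composition) of bijections of `L` preserving `d`. -/
def IsomGroup {A : Type*} (d : List A → List A → ℝ) (L : Set (List A)) :
    Subgroup (Equiv.Perm L) where
  carrier := {φ : Equiv.Perm L | ∀ u v : L, d (φ u) (φ v) = d u v}
  one_mem' := by intro u v; rfl
  mul_mem' := by intro φ ψ hφ hψ u v; simp only [Equiv.Perm.mul_apply]; rw [hφ, hψ]
  inv_mem' := by
    intro φ hφ u v
    have h := hφ (φ⁻¹ u) (φ⁻¹ v)
    simpa using h.symm

def natIsometryGroup (N : Set ℕ) : Subgroup (Equiv.Perm N) where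
  carrier := {θ | ∀ m n : N, Nat.dist (θ m) (θ n) = Nat.dist m n}
  one_mem' _ _ := rfl
  mul_mem' {φ ψ} hφ hψ m n := (hφ (ψ m) (ψ n)).trans (hψ m n)
  inv_mem' {θ} hθ m n := by simpa using (hθ (θ⁻¹ m) (θ⁻¹ n)).symm

namespace natIsometryGroup

variable {N : Set ℕ} {θ φ ψ : Equiv.Perm N} {m : N}

theorem eq_one_of_apply_eq (hθ : θ ∈ natIsometryGroup N) (hm : IsBot m) (hfix : θ m = m) :
    θ = 1 := by
  ext n
  have hdist := hθ n m
  rw [hfix] at hdist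
  have : (m : ℕ) ≤ n := hm n
  have : (m : ℕ) ≤ θ n := hm (θ n)
  simp only [Nat.dist] at hdist
  change (θ n : ℕ) = n
  omega

theorem eq_of_apply_eq (hφ : φ ∈ natIsometryGroup N) (hψ : ψ ∈ natIsometryGroup N)
    (hm : IsBot m) (h : φ m = ψ m) : φ = ψ := by
  have hfix : (ψ⁻¹ * φ) m = m := by
    rw [Equiv.Perm.mul_apply, h, Equiv.Perm.coe_inv, Equiv.symm_apply_apply]
  exact (inv_mul_eq_one.mp (eq_one_of_apply_eq (mul_mem (inv_mem hψ) hφ) hm hfix)).symm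

theorem apply_eq_or_isTop (hθ : θ ∈ natIsometryGroup N) (hm : IsBot m) :
    θ m = m ∨ IsTop (θ m) := by
  refine or_iff_not_imp_left.mpr fun hne n => ?_
  have hpre : θ.symm m = θ m := by
    have hdist := hθ (θ.symm m) m
    rw [Equiv.apply_symm_apply] at hdist
    have : (m : ℕ) ≤ θ.symm m := hm (θ.symm m)
    have : (m : ℕ) ≤ θ m := hm (θ m)
    simp only [Nat.dist] at hdist
    exact Subtype.ext (by omega)
  have hswap : θ (θ m) = m := by rw [← hpre, Equiv.apply_symm_apply]
  have hne' : (θ m : ℕ) ≠ m := fun h => hne (Subtype.ext h)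
  have hdist_swap := hθ n (θ m)
  have hdist_m := hθ n m
  rw [hswap] at hdist_swap
  have : (m : ℕ) ≤ n := hm n
  have : (m : ℕ) ≤ θ m := hm (θ m)
  have : (m : ℕ) ≤ θ n := hm (θ n)
  simp only [Nat.dist] at hdist_swap hdist_m
  change (n : ℕ) ≤ θ m
  omega

end natIsometryGroup

theorem eq_or_eq_or_eq_of_eq_or_isTop {α : Type*} [PartialOrder α] {m a b c : α}
    (ha : a = m ∨ IsTop a) (hb : b = m ∨ IsTop b) (hc : c = m ∨ IsTop c) :
    a = b ∨ a = c ∨ b = c := by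
  have top_eq {x y : α} (hx : IsTop x) (hy : IsTop y) : x = y := le_antisymm (hy x) (hx y)
  grind

/-- For any subset `N ⊆ ℕ` with the distance `d(m, n) = |m - n|`, the
group of self-isometries of `N` (bijections preserving the distance) has at most two
elements. -/
theorem stmt_4 (N : Set ℕ) (φ ψ χ : Equiv.Perm N)
    (hφ : ∀ m n : N, Nat.dist (φ m : ℕ) (φ n : ℕ) = Nat.dist (m : ℕ) (n : ℕ))
    (hψ : ∀ m n : N, Nat.dist (ψ m : ℕ) (ψ n : ℕ) = Nat.dist (m : ℕ) (n : ℕ))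
    (hχ : ∀ m n : N, Nat.dist (χ m : ℕ) (χ n : ℕ) = Nat.dist (m : ℕ) (n : ℕ)) :
    φ = ψ ∨ φ = χ ∨ ψ = χ := by
  rcases N.eq_empty_or_nonempty with rfl | hN
  · exact Or.inl (Subsingleton.elim φ ψ)
  let m : N := ⟨sInf N, Nat.sInf_mem hN⟩
  have hm : IsBot m := fun n => Nat.sInf_le n.2
  have hval {θ : Equiv.Perm N} (hθ : θ ∈ natIsometryGroup N) :=
    natIsometryGroup.apply_eq_or_isTop hθ hm
  have heq {θ θ' : Equiv.Perm N} (hθ : θ ∈ natIsometryGroup N)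
      (hθ' : θ' ∈ natIsometryGroup N) := natIsometryGroup.eq_of_apply_eq hθ hθ' hm
  exact (eq_or_eq_or_eq_of_eq_or_isTop (hval hφ) (hval hψ) (hval hχ)).imp (heq hφ hψ)
    (Or.imp (heq hφ hχ) (heq hψ hχ))
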